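/- arXiv:2501.03234 — 2 statements merged into one kernel-verified Lean document; each statement's English description precedes it below -/
import Mathlib

section
/- If k is an odd prime, then S(k) ≡ 0 (mod 4) when k ≡ 1 (mod 4), and S(k) ≡ 2 (mod 4) when k ≡ 3 (mod 4). -/
/-!
Since `k` is prime, `k ∤ hj` for `0 < h, j < k`, so `⌊hj/k⌋ + ⌊(k-h)j/k⌋ = j - 1`.
Hence the `j`-th terms of `S(h,k)` and `S(k-h,k)` are `(-1)^q` and `(-1)^q'` with `q + q' = j - 1`:
their sum is `±2` for odd `j` and `0` for even `j`, so `S(h,k) + S(k-h,k) ≡ k - 1 (mod 4)`.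
Pairing `h` with `k - h` gives `S(k) ≡ m (k - 1) = 2m² (mod 4)` for `k = 2m + 1`.
-/

/-- `S(h,k) := ∑_{j=1}^{k-1} (-1)^{j+1+⌊hj/k⌋}` (here `h*j/k` is natural-number
division, which agrees with the floor of the rational `hj/k`). -/
def Spair (h k : ℕ) : ℤ := ∑ j ∈ Finset.Icc 1 (k - 1), (-1 : ℤ) ^ (j + 1 + h * j / k)

/-- `S(k) := ∑_{h=1}^{k-1} S(h,k)`. -/
def Ssum (k : ℕ) : ℤ := ∑ h ∈ Finset.Icc 1 (k - 1), Spair h k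

open Finset

theorem Nat.div_add_div_add_one_of_add_eq_mul {a b k j : ℕ} (hsum : a + b = k * j)
    (ha : ¬ k ∣ a) : a / k + b / k + 1 = j := by
  have hk : 0 < k := Nat.pos_of_ne_zero fun hk0 => ha (by simp_all)
  have hle : k ≤ a % k + b % k := by
    by_contra! hlt
    have hsum_mod : (a % k + b % k) % k = 0 := by
      rw [← Nat.add_mod, hsum, Nat.mul_mod_right]
    rw [Nat.mod_eq_of_lt hlt] at hsum_mod
    exact ha (Nat.dvd_of_mod_eq_zero (by omega))
  rw [← Nat.add_div_eq_of_le_mod_add_mod hle hk, hsum, Nat.mul_div_cancel_left _ hk]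

theorem Finset.sum_Icc_one_two_mul_eq_sum_add_reflect {M : Type*} [AddCommMonoid M]
    (f : ℕ → M) (m : ℕ) :
    ∑ h ∈ Icc 1 (2 * m), f h = ∑ h ∈ Icc 1 m, (f h + f (2 * m + 1 - h)) := by
  have hsplit : ∑ h ∈ Icc 1 (2 * m), f h
      = ∑ h ∈ Icc 1 m, f h + ∑ h ∈ Icc (m + 1) (2 * m), f h := by
    have hIoc (b : ℕ) : Icc 1 b = Ioc 0 b := Icc_add_one_left_eq_Ioc 0 b
    rw [hIoc, hIoc, Icc_add_one_left_eq_Ioc,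
      sum_Ioc_consecutive f (Nat.zero_le m) (by omega : m ≤ 2 * m)]
  rw [hsplit, sum_add_distrib]
  congr 1
  refine sum_nbij' (fun h => 2 * m + 1 - h) (fun h => 2 * m + 1 - h) ?_ ?_ ?_ ?_ ?_ <;>
    intro h hh <;> simp only [mem_Icc] at hh ⊢
  · omega
  · omega
  · omega
  · omega
  · congr 1
    omega

theorem sum_Icc_one_add_neg_one_pow {R : Type*} [Ring R] (m : ℕ) :
    ∑ j ∈ Icc 1 (2 * m), (1 + (-1 : R) ^ (j + 1)) = 2 * m := by
  induction m with
  | zero => simp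
  | succ m ih =>
    rw [show 2 * (m + 1) = 2 * m + 1 + 1 by ring, sum_Icc_succ_top (by omega),
      sum_Icc_succ_top (by omega), ih]
    simp only [pow_add, pow_mul, neg_one_sq, one_pow, pow_one, one_mul, neg_mul_neg, mul_one]
    push_cast
    noncomm_ring

theorem neg_one_pow_add_neg_one_pow_of_add_eq {q q' j : ℕ} (hj : q + q' + 1 = j) :
    (-1 : ZMod 4) ^ (j + 1 + q) + (-1) ^ (j + 1 + q') = 1 + (-1) ^ (j + 1) := by
  subst hj
  rcases Nat.even_or_odd' q with ⟨a, rfl | rfl⟩ <;>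
    rcases Nat.even_or_odd' q' with ⟨b, rfl | rfl⟩ <;>
    simp only [pow_add, pow_mul, neg_one_sq, one_pow] <;> decide

theorem cast_Spair_add_Spair_sub {h k : ℕ} (hhk : h.Coprime k) (hle : h ≤ k) :
    ((Spair h k + Spair (k - h) k : ℤ) : ZMod 4)
      = ∑ j ∈ Icc 1 (k - 1), (1 + (-1 : ZMod 4) ^ (j + 1)) := by
  simp only [Spair, ← sum_add_distrib]
  push_cast
  refine sum_congr rfl fun j hj => neg_one_pow_add_neg_one_pow_of_add_eq ?_
  rw [mem_Icc] at hj
  refine Nat.div_add_div_add_one_of_add_eq_mul (by rw [← add_mul, Nat.add_sub_cancel' hle]) ?_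
  intro hdvd
  have := Nat.le_of_dvd (by omega) (hhk.symm.dvd_of_dvd_mul_left hdvd)
  omega

theorem cast_Ssum_two_mul_add_one {m : ℕ} (hk : (2 * m + 1).Prime) :
    (Ssum (2 * m + 1) : ZMod 4) = 2 * m ^ 2 := by
  have hpair : ∀ h ∈ Icc 1 m,
      ((Spair h (2 * m + 1) + Spair (2 * m + 1 - h) (2 * m + 1) : ℤ) : ZMod 4) = 2 * m := by
    intro h hh
    rw [mem_Icc] at hh
    have hcop : h.Coprime (2 * m + 1) :=
      ((hk.coprime_iff_not_dvd).2 fun hdvd => by have := Nat.le_of_dvd (by omega) hdvd; omega).symm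
    rw [cast_Spair_add_Spair_sub hcop (by omega), Nat.add_sub_cancel, sum_Icc_one_add_neg_one_pow]
  rw [Ssum, Nat.add_sub_cancel, sum_Icc_one_two_mul_eq_sum_add_reflect, Int.cast_sum,
    sum_congr rfl hpair, sum_const, Nat.card_Icc, nsmul_eq_mul]
  push_cast
  ring

theorem stmt_8 (k : ℕ) (hk : k.Prime) (hodd : Odd k) :
    (k % 4 = 1 → Ssum k % 4 = 0) ∧ (k % 4 = 3 → Ssum k % 4 = 2) := by
  obtain ⟨m, rfl⟩ := hodd
  have hmod : Ssum (2 * m + 1) % 4 = 2 * (m : ℤ) ^ 2 % 4 :=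
    (ZMod.intCast_eq_intCast_iff' _ _ 4).1 (by push_cast; exact cast_Ssum_two_mul_add_one hk)
  rw [hmod]
  rcases Nat.even_or_odd' m with ⟨t, rfl | rfl⟩ <;> push_cast <;> ring_nf <;> omega
end

section
/- For each odd prime p, T(p) = 1 - 2p. -/
/-- `T(h,k) := ∑_{j=1}^{2k-1} (-1)^{j+1+⌊hj/k⌋}`. -/
def Tpair (h k : ℕ) : ℤ := ∑ j ∈ Finset.Icc 1 (2 * k - 1), (-1 : ℤ) ^ (j + 1 + h * j / k)

/-- `T(k) := ∑_{h=1}^{2k-1} T(h,k)`. -/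
def Tsum (k : ℕ) : ℤ := ∑ h ∈ Finset.Icc 1 (2 * k - 1), Tpair h k

/-!
Swapping the two sums, the column of index `j` equals `(-1)^(j+1) S(j)` with
`S(j) = ∑_{h=1}^{2p-1} (-1)^⌊hj/p⌋`. For odd `j`, the shift `h ↦ h + p` flips the sign of the
summand, so `S(j) = -(-1)^⌊0⌋ = -1`. For even `j` (coprime to `p`, as `p` is an odd prime), the
reflection `h ↦ 2p - h` pairs off terms of opposite sign because `⌊x⌋ + ⌊2j - x⌋ = 2j - 1` for
non-integral `x`, leaving only the term `h = p`, which is `(-1)^j = 1`. Either way every one of the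
`2p - 1` columns contributes `-1`.
-/

open Finset

lemma neg_one_pow_add_neg_one_pow_of_odd_add {R : Type*} [Ring R] {a b : ℕ} (h : Odd (a + b)) :
    (-1 : R) ^ a + (-1) ^ b = 0 := by
  rcases Nat.even_or_odd a with ha | ha
  · rw [ha.neg_one_pow, (Nat.odd_add'.mp h |>.mpr ha).neg_one_pow, add_neg_cancel]
  · rw [ha.neg_one_pow, (Nat.odd_add.mp h |>.mp ha).neg_one_pow, neg_add_cancel]

/-- The floor reflection `⌊x⌋ + ⌊m - x⌋ = m - 1` for non-integral `x = n / p`. -/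
lemma Nat.div_add_mul_sub_div_of_not_dvd {p n m : ℕ} (hn : ¬ p ∣ n) (hnm : n ≤ p * m) :
    n / p + (p * m - n) / p + 1 = m := by
  obtain ⟨x, rfl⟩ : ∃ x, n = x + 1 := ⟨n - 1, by rcases n with _ | _ <;> simp_all⟩
  rw [Nat.mul_sub_div x p m (by omega), Nat.succ_div_of_not_dvd hn]
  have : x / p < m := Nat.div_lt_of_lt_mul (by omega)
  omega

lemma range_eq_insert_zero_Icc {n : ℕ} (hn : 0 < n) : range n = insert 0 (Icc 1 (n - 1)) := by
  ext h; simp only [mem_range, mem_insert, mem_Icc]; omega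

variable {p j : ℕ}

lemma sum_Icc_neg_one_pow_mul_div_of_odd (hp : 0 < p) (hj : Odd j) :
    ∑ h ∈ Icc 1 (2 * p - 1), (-1 : ℤ) ^ (h * j / p) = -1 := by
  have hshift : ∀ h, (-1 : ℤ) ^ ((p + h) * j / p) = -(-1) ^ (h * j / p) := fun h => by
    rw [add_mul, add_comm, Nat.add_mul_div_left _ _ hp, pow_add, hj.neg_one_pow, mul_neg_one]
  have hperiod : ∑ h ∈ range (2 * p), (-1 : ℤ) ^ (h * j / p) = 0 := by
    rw [two_mul, sum_range_add]
    simp only [hshift, sum_neg_distrib, add_neg_cancel]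
  rw [range_eq_insert_zero_Icc (by omega), sum_insert (by simp)] at hperiod
  simpa [eq_neg_iff_add_eq_zero, add_comm] using hperiod

lemma sum_Icc_neg_one_pow_mul_div_of_coprime (hp : 0 < p) (hj : p.Coprime j) :
    ∑ h ∈ Icc 1 (2 * p - 1), (-1 : ℤ) ^ (h * j / p) = (-1) ^ j := by
  have hp_mem : p ∈ Icc 1 (2 * p - 1) := mem_Icc.mpr ⟨hp, by omega⟩
  rw [← add_sum_erase _ _ hp_mem, Nat.mul_div_cancel_left j hp, add_eq_left]
  refine sum_involution (fun h _ => 2 * p - h) (fun h hh => ?_) (fun h hh _ => ?_)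
    (fun h hh => ?_) (fun h hh => ?_)
  all_goals simp only [mem_erase, mem_Icc] at hh
  · apply neg_one_pow_add_neg_one_pow_of_odd_add
    have hndvd : ¬ p ∣ h * j := fun hd => by
      obtain ⟨c, hc⟩ := hj.dvd_of_dvd_mul_right hd
      rcases c with _ | _ | c
      · omega
      · omega
      · have : 2 * p ≤ p * (c + 1 + 1) := by nlinarith
        omega
    have hle : h * j ≤ p * (2 * j) := by
      rw [← mul_assoc, mul_comm p 2]; exact Nat.mul_le_mul_right j (by omega)
    rw [Nat.sub_mul, mul_assoc, mul_left_comm]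
    have := Nat.div_add_mul_sub_div_of_not_dvd hndvd hle
    generalize h * j / p = a, (p * (2 * j) - h * j) / p = b at *
    exact ⟨j - 1, by omega⟩
  · omega
  · simp only [mem_erase, mem_Icc]; omega
  · omega

lemma sum_Icc_neg_one_pow_add_one_add_mul_div (hp : p.Prime) (hodd : Odd p) (hj0 : 0 < j)
    (hj : j < 2 * p) :
    ∑ h ∈ Icc 1 (2 * p - 1), (-1 : ℤ) ^ (j + 1 + h * j / p) = -1 := by
  simp only [pow_add _ (j + 1), ← mul_sum]
  rcases Nat.even_or_odd j with heven | hodd_j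
  · have hcop : p.Coprime j := hp.coprime_iff_not_dvd.mpr fun ⟨c, hc⟩ => by
      obtain rfl : c = 1 := by
        rcases c with _ | _ | c
        · omega
        · rfl
        · nlinarith
      exact Nat.not_even_iff_odd.mpr hodd (by simpa [hc] using heven)
    rw [sum_Icc_neg_one_pow_mul_div_of_coprime hp.pos hcop, heven.neg_one_pow,
      heven.add_one.neg_one_pow]
    norm_num
  · rw [sum_Icc_neg_one_pow_mul_div_of_odd hp.pos hodd_j, hodd_j.add_one.neg_one_pow]
    norm_num

theorem stmt_15 (p : ℕ) (hp : p.Prime) (hodd : Odd p) : Tsum p = 1 - 2 * (p : ℤ) := by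
  have hcolumn : ∀ j ∈ Icc 1 (2 * p - 1),
      ∑ h ∈ Icc 1 (2 * p - 1), (-1 : ℤ) ^ (j + 1 + h * j / p) = -1 := fun j hj => by
    rw [mem_Icc] at hj
    exact sum_Icc_neg_one_pow_add_one_add_mul_div hp hodd (by omega) (by omega)
  rw [Tsum]
  simp only [Tpair]
  rw [sum_comm, sum_congr rfl hcolumn, sum_const, Nat.card_Icc, smul_neg, nsmul_one]
  have hp0 : 0 < p := hp.pos
  push_cast [show 1 ≤ 2 * p by omega]
  ring
end
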